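/- Let k > 0, b ≥ 0, assume the moments m₂ := ∫₀^∞ τ²f(τ)dτ and m₃ := ∫₀^∞ τ³f(τ)dτ are finite, and set φ₁(γ) := ∫₀^∞ f(τ)e^{−γτ}dτ, φ₂(γ) := ∫₀^∞ f(τ)e^{−2γτ}dτ, CV² := (m₂ − m₁²)/m₁². Define the steady-state mean x̄(γ) := k/γ − (k/(2γ²m₁))·(1−φ₁)/(1−φ₁/2) and second moment x̄²(γ) := (bk/(2γ²m₁))·((1−φ₂)/(1−φ₂/4))·((1−φ₁)/(1−φ₁/2)) + k²/γ² + (k²/(16γ³m₁))·(−14 + 17φ₁ + φ₂(2−5φ₁))/((1−φ₂/4)(1−φ₁/2)). Then lim_{γ→0⁺} (x̄²(γ) − x̄(γ)²)/x̄(γ)² = 1/27 + 4·(9·m₃/m₁³ − 9 − 6·CV² − 7·CV⁴)/(27·(3+CV²)²) + (16b/(3(3+CV²)))·(2/(k·m₁·(3+CV²))). (Equation (50): noise decomposition for a stable gene product into cell-cycle-time and partitioning contributions.) -/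

import Mathlib

/-!
The Laplace transform `φ(γ) = ∫ f(τ) e^{-γτ} dτ` of a density with three finite moments satisfies
`φ(γ) = 1 - m₁γ + m₂γ²/2 - w(γ)γ³` with `w(γ) → m₃/6` as `γ → 0⁺`: by dominated convergence,
since `|e^{-x} - (1 - x + x²/2 - x³/6)| ≤ 4x³` for `x ≥ 0`. Substituting this expansion for
`φ₁(γ) = φ(γ)` and `φ₂(γ) = φ(2γ)` into `x̄` and `x̄²`, the poles at `γ = 0` cancel exactly and
both become rational functions of `(γ, w(γ), w(2γ))`, continuous at `(0, m₃/6, m₃/6)`.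
Evaluating there gives the limits of `x̄` and `x̄²`, hence of the noise.
-/

open MeasureTheory Filter Topology Set Real

noncomputable def expNegTaylorRem (x : ℝ) : ℝ := exp (-x) - (1 - x + x ^ 2 / 2 - x ^ 3 / 6)

lemma abs_expNegTaylorRem_le_pow_four {x : ℝ} (hx : |x| ≤ 1) : |expNegTaylorRem x| ≤ x ^ 4 := by
  have h := Real.exp_bound (x := -x) (by rwa [abs_neg]) (n := 4) (by norm_num)
  norm_num [Finset.sum_range_succ, Nat.factorial] at h
  calc |expNegTaylorRem x| = |exp (-x) - (1 + -x + x ^ 2 / 2 + (-x) ^ 3 / 6)| := by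
        rw [expNegTaylorRem]; ring_nf
    _ ≤ |x| ^ 4 * (5 / 96) := h
    _ ≤ x ^ 4 := by rw [pow_abs, abs_of_nonneg (by positivity)]; nlinarith [pow_two_nonneg (x ^ 2)]

lemma abs_expNegTaylorRem_le {x : ℝ} (hx : 0 ≤ x) : |expNegTaylorRem x| ≤ 4 * x ^ 3 := by
  rcases le_total x 1 with hx1 | hx1
  · calc |expNegTaylorRem x| ≤ x ^ 4 :=
          abs_expNegTaylorRem_le_pow_four (abs_le.2 ⟨by linarith, hx1⟩)
      _ ≤ 4 * x ^ 3 := by nlinarith [pow_nonneg hx 3]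
  · have he : exp (-x) ≤ 1 := exp_le_one_iff.2 (by linarith)
    rw [expNegTaylorRem, abs_le]
    constructor <;> nlinarith [exp_pos (-x), pow_le_pow_left₀ zero_le_one hx1 3,
      mul_le_mul hx1 hx1 zero_le_one hx]

lemma continuous_expNegTaylorRem : Continuous expNegTaylorRem := by
  unfold expNegTaylorRem
  fun_prop

lemma abs_expNegTaylorRem_mul_div_cube_le {γ τ : ℝ} (hγ : 0 < γ) (hτ : 0 ≤ τ) :
    |expNegTaylorRem (γ * τ) / γ ^ 3| ≤ 4 * τ ^ 3 := by
  rw [abs_div, abs_of_pos (pow_pos hγ 3), div_le_iff₀ (pow_pos hγ 3)]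
  calc |expNegTaylorRem (γ * τ)| ≤ 4 * (γ * τ) ^ 3 := abs_expNegTaylorRem_le (by positivity)
    _ = 4 * τ ^ 3 * γ ^ 3 := by ring

lemma tendsto_expNegTaylorRem_mul_div_cube (τ : ℝ) :
    Tendsto (fun γ => expNegTaylorRem (γ * τ) / γ ^ 3) (𝓝[>] 0) (𝓝 0) := by
  have hsmall : ∀ᶠ γ in 𝓝[>] (0 : ℝ), |γ * τ| ≤ 1 :=
    tendsto_nhdsWithin_of_tendsto_nhds ((continuous_mul_const τ).tendsto' 0 0 (zero_mul τ))
      |>.eventually (Icc_mem_nhds (by norm_num) one_pos) |>.mono fun _ => abs_le.2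
  refine squeeze_zero_norm' ?_ (tendsto_nhdsWithin_of_tendsto_nhds
    ((continuous_const_mul (τ ^ 4)).tendsto' 0 0 (mul_zero _)))
  filter_upwards [self_mem_nhdsWithin, hsmall] with γ (hγ : 0 < γ) hγτ
  rw [norm_div, norm_pow, Real.norm_eq_abs, Real.norm_eq_abs, abs_of_pos hγ,
    div_le_iff₀ (pow_pos hγ 3)]
  calc |expNegTaylorRem (γ * τ)| ≤ (γ * τ) ^ 4 := abs_expNegTaylorRem_le_pow_four hγτ
    _ = τ ^ 4 * γ * γ ^ 3 := by ring

lemma tendsto_integral_mul_expNegTaylorRem_div_cube {f : ℝ → ℝ} (h₀ : IntegrableOn f (Ioi 0))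
    (h₃ : IntegrableOn (fun τ => τ ^ 3 * f τ) (Ioi 0)) :
    Tendsto (fun γ => (∫ τ in Ioi 0, f τ * expNegTaylorRem (γ * τ)) / γ ^ 3) (𝓝[>] 0) (𝓝 0) := by
  simp_rw [← integral_div, mul_div_assoc]
  have hf_meas := h₀.aestronglyMeasurable
  have hcont := continuous_expNegTaylorRem
  have h := tendsto_integral_filter_of_dominated_convergence (l := 𝓝[>] (0 : ℝ))
    (μ := volume.restrict (Ioi 0)) (F := fun γ τ => f τ * (expNegTaylorRem (γ * τ) / γ ^ 3))
    (f := fun _ => 0) (fun τ => 4 * |τ ^ 3 * f τ|) (.of_forall fun γ => by fun_prop) ?_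
    (h₃.norm.const_mul 4)
    (.of_forall fun τ => by simpa using (tendsto_expNegTaylorRem_mul_div_cube τ).const_mul (f τ))
  · simpa using h
  filter_upwards [self_mem_nhdsWithin] with γ (hγ : 0 < γ)
  filter_upwards [ae_restrict_mem measurableSet_Ioi] with τ (hτ : 0 < τ)
  rw [norm_mul, Real.norm_eq_abs, Real.norm_eq_abs, abs_mul, abs_of_pos (pow_pos hτ 3)]
  nlinarith [abs_expNegTaylorRem_mul_div_cube_le hγ hτ.le, abs_nonneg (f τ)]

lemma integrableOn_mul_exp_neg {f : ℝ → ℝ} (hf : IntegrableOn f (Ioi 0)) {γ : ℝ} (hγ : 0 ≤ γ) :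
    IntegrableOn (fun τ => f τ * exp (-γ * τ)) (Ioi 0) := by
  refine hf.mul_bdd (c := 1) (by fun_prop) ?_
  filter_upwards [ae_restrict_mem measurableSet_Ioi] with τ hτ
  rw [norm_of_nonneg (exp_pos _).le, exp_le_one_iff]
  nlinarith [mem_Ioi.1 hτ]

lemma integral_mul_exp_neg_le_integral {f : ℝ → ℝ} (hf : IntegrableOn f (Ioi 0))
    (hf_nonneg : ∀ τ, 0 < τ → 0 ≤ f τ) {γ : ℝ} (hγ : 0 ≤ γ) :
    ∫ τ in Ioi 0, f τ * exp (-γ * τ) ≤ ∫ τ in Ioi 0, f τ := by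
  refine setIntegral_mono_on (integrableOn_mul_exp_neg hf hγ) hf measurableSet_Ioi fun τ hτ => ?_
  have : exp (-γ * τ) ≤ 1 := exp_le_one_iff.2 (by nlinarith [mem_Ioi.1 hτ])
  nlinarith [hf_nonneg τ hτ]

lemma integral_mul_exp_neg_sub_taylor {f : ℝ → ℝ} (h₀ : IntegrableOn f (Ioi 0))
    (h₁ : IntegrableOn (fun τ => τ * f τ) (Ioi 0))
    (h₂ : IntegrableOn (fun τ => τ ^ 2 * f τ) (Ioi 0))
    (h₃ : IntegrableOn (fun τ => τ ^ 3 * f τ) (Ioi 0)) {γ : ℝ} (hγ : 0 ≤ γ) :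
    (∫ τ in Ioi 0, f τ * exp (-γ * τ)) - ((∫ τ in Ioi 0, f τ) - γ * (∫ τ in Ioi 0, τ * f τ)
      + γ ^ 2 / 2 * (∫ τ in Ioi 0, τ ^ 2 * f τ) - γ ^ 3 / 6 * (∫ τ in Ioi 0, τ ^ 3 * f τ))
      = ∫ τ in Ioi 0, f τ * expNegTaylorRem (γ * τ) := by
  have hsplit : (∫ τ in Ioi 0, f τ * expNegTaylorRem (γ * τ)) = ∫ τ in Ioi 0,
      (f τ * exp (-γ * τ) - (f τ - γ * (τ * f τ) + γ ^ 2 / 2 * (τ ^ 2 * f τ)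
        - γ ^ 3 / 6 * (τ ^ 3 * f τ))) := by
    congr 1 with τ
    rw [expNegTaylorRem, neg_mul]
    ring
  have hexp := integrableOn_mul_exp_neg h₀ hγ
  unfold IntegrableOn at *
  rw [hsplit, integral_sub (by fun_prop) (by fun_prop), integral_sub (by fun_prop) (by fun_prop),
    integral_add (by fun_prop) (by fun_prop), integral_sub (by fun_prop) (by fun_prop),
    integral_const_mul, integral_const_mul, integral_const_mul]

noncomputable def thirdOrderQuot (m₁ m₂ : ℝ) (φ : ℝ → ℝ) (γ : ℝ) : ℝ :=
  (1 - m₁ * γ + m₂ * γ ^ 2 / 2 - φ γ) / γ ^ 3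

lemma eq_sub_thirdOrderQuot_mul {m₁ m₂ γ : ℝ} (φ : ℝ → ℝ) (hγ : γ ≠ 0) :
    φ γ = 1 - m₁ * γ + m₂ * γ ^ 2 / 2 - thirdOrderQuot m₁ m₂ φ γ * γ ^ 3 := by
  rw [thirdOrderQuot]
  field_simp
  ring

theorem tendsto_thirdOrderQuot_laplace {f : ℝ → ℝ} {m₁ m₂ m₃ : ℝ}
    (hprob : ∫ τ in Ioi 0, f τ = 1)
    (hm₁ : m₁ = ∫ τ in Ioi 0, τ * f τ) (h₁ : IntegrableOn (fun τ => τ * f τ) (Ioi 0))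
    (hm₂ : m₂ = ∫ τ in Ioi 0, τ ^ 2 * f τ) (h₂ : IntegrableOn (fun τ => τ ^ 2 * f τ) (Ioi 0))
    (hm₃ : m₃ = ∫ τ in Ioi 0, τ ^ 3 * f τ) (h₃ : IntegrableOn (fun τ => τ ^ 3 * f τ) (Ioi 0)) :
    Tendsto (thirdOrderQuot m₁ m₂ fun γ => ∫ τ in Ioi 0, f τ * exp (-γ * τ)) (𝓝[>] 0)
      (𝓝 (m₃ / 6)) := by
  have h₀ : IntegrableOn f (Ioi 0) := .of_integral_ne_zero (by simp [hprob])
  have h := (tendsto_const_nhds (x := m₃ / 6)).sub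
    (tendsto_integral_mul_expNegTaylorRem_div_cube h₀ h₃)
  rw [sub_zero] at h
  refine h.congr' ?_
  filter_upwards [self_mem_nhdsWithin] with γ (hγ : 0 < γ)
  have hrem := integral_mul_exp_neg_sub_taylor h₀ h₁ h₂ h₃ hγ.le
  rw [hprob, ← hm₁, ← hm₂, ← hm₃] at hrem
  rw [thirdOrderQuot, ← hrem]
  field_simp
  ring

/-- `x̄(γ)` with `φ = 1 - m₁γ + m₂γ²/2 - wγ³` substituted and the poles at `γ = 0` cancelled:
here `u = (1 - φ) / γ` and `v = (m₁ - u) / γ`. -/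
noncomputable def meanForm (k m₁ m₂ γ w : ℝ) : ℝ :=
  let v := m₂ / 2 - γ * w
  let u := m₁ - γ * v
  k * (v + m₁ * u) / (m₁ * (1 + γ * u))

/-- The same for `x̄²(γ)`, with `φ₁ = φ(γ)` expanded with cubic coefficient `w₁` and
`φ₂ = φ(2γ)` with cubic coefficient `w₂`. -/
noncomputable def secondMomentForm (k b m₁ m₂ γ w₁ w₂ : ℝ) : ℝ :=
  let v₁ := m₂ / 2 - γ * w₁
  let v₂ := m₂ / 2 - 2 * γ * w₂
  let u₁ := m₁ - γ * v₁
  let u₂ := m₁ - 2 * γ * v₂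
  let d := m₁ * (3 + 2 * γ * u₂) * (1 + γ * u₁)
  8 * b * k * u₁ * u₂ / d + k ^ 2 * (12 * (2 * w₂ - w₁) + 4 * m₁ * v₁ + 12 * m₁ * v₂
    - 20 * γ * v₁ * v₂ + 4 * m₁ * u₁ * u₂) / (2 * d)

lemma meanForm_eq {k m₁ m₂ γ w φ : ℝ} (hγ : γ ≠ 0) (hm₁ : m₁ ≠ 0)
    (hφ : φ = 1 - m₁ * γ + m₂ * γ ^ 2 / 2 - w * γ ^ 3) (hφ2 : φ < 2) :
    k / γ - k / (2 * γ ^ 2 * m₁) * ((1 - φ) / (1 - φ / 2)) = meanForm k m₁ m₂ γ w := by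
  have hd : 1 + γ * (m₁ - γ * (m₂ / 2 - γ * w)) = 2 - φ := by rw [hφ]; ring
  have hd0 : 2 - φ ≠ 0 := by linarith
  simp only [meanForm]
  rw [hd]
  field_simp
  rw [hφ]
  ring

lemma secondMomentForm_eq {k b m₁ m₂ γ w₁ w₂ φ₁ φ₂ : ℝ} (hγ : γ ≠ 0) (hm₁ : m₁ ≠ 0)
    (hφ₁ : φ₁ = 1 - m₁ * γ + m₂ * γ ^ 2 / 2 - w₁ * γ ^ 3)
    (hφ₂ : φ₂ = 1 - m₁ * (2 * γ) + m₂ * (2 * γ) ^ 2 / 2 - w₂ * (2 * γ) ^ 3)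
    (hφ₁2 : φ₁ < 2) (hφ₂4 : φ₂ < 4) :
    b * k / (2 * γ ^ 2 * m₁) * ((1 - φ₂) / (1 - φ₂ / 4)) * ((1 - φ₁) / (1 - φ₁ / 2)) +
        k ^ 2 / γ ^ 2 + k ^ 2 / (16 * γ ^ 3 * m₁) *
          ((-14 + 17 * φ₁ + φ₂ * (2 - 5 * φ₁)) / ((1 - φ₂ / 4) * (1 - φ₁ / 2)))
      = secondMomentForm k b m₁ m₂ γ w₁ w₂ := by
  have hd₁ : 1 + γ * (m₁ - γ * (m₂ / 2 - γ * w₁)) = 2 - φ₁ := by rw [hφ₁]; ring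
  have hd₂ : 3 + 2 * γ * (m₁ - 2 * γ * (m₂ / 2 - 2 * γ * w₂)) = 4 - φ₂ := by rw [hφ₂]; ring
  have hd₁0 : 2 - φ₁ ≠ 0 := by linarith
  have hd₂0 : 4 - φ₂ ≠ 0 := by linarith
  simp only [secondMomentForm]
  rw [hd₁, hd₂]
  field_simp
  rw [hφ₁, hφ₂]
  ring

lemma tendsto_meanForm {α : Type*} {l : Filter α} {g w : α → ℝ} {c k m₁ m₂ : ℝ}
    (hg : Tendsto g l (𝓝 0)) (hw : Tendsto w l (𝓝 c)) (hm₁ : m₁ ≠ 0) :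
    Tendsto (fun x => meanForm k m₁ m₂ (g x) (w x)) l (𝓝 (k * (m₂ / 2 + m₁ ^ 2) / m₁)) := by
  have hcont : ContinuousAt (fun p : ℝ × ℝ => meanForm k m₁ m₂ p.1 p.2) (0, c) := by
    simp only [meanForm]
    exact ContinuousAt.div (by fun_prop) (by fun_prop) (by simpa using hm₁)
  have hval : meanForm k m₁ m₂ 0 c = k * (m₂ / 2 + m₁ ^ 2) / m₁ := by
    simp only [meanForm]
    ring
  rw [← hval]
  simpa only [Function.comp_def] using hcont.tendsto.comp (hg.prodMk_nhds hw)

lemma tendsto_secondMomentForm {α : Type*} {l : Filter α} {g w₁ w₂ : α → ℝ} {k b m₁ m₂ m₃ : ℝ}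
    (hg : Tendsto g l (𝓝 0)) (hw₁ : Tendsto w₁ l (𝓝 (m₃ / 6))) (hw₂ : Tendsto w₂ l (𝓝 (m₃ / 6)))
    (hm₁ : m₁ ≠ 0) :
    Tendsto (fun x => secondMomentForm k b m₁ m₂ (g x) (w₁ x) (w₂ x)) l
      (𝓝 (8 * b * k * m₁ / 3 + k ^ 2 * (m₃ + 4 * m₁ * m₂ + 2 * m₁ ^ 3) / (3 * m₁))) := by
  have hcont : ContinuousAt (fun p : ℝ × ℝ × ℝ => secondMomentForm k b m₁ m₂ p.1 p.2.1 p.2.2)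
      (0, m₃ / 6, m₃ / 6) := by
    simp only [secondMomentForm]
    exact (ContinuousAt.div (by fun_prop) (by fun_prop) (by simpa using hm₁)).add
      (ContinuousAt.div (by fun_prop) (by fun_prop) (by simpa using hm₁))
  have hval : secondMomentForm k b m₁ m₂ 0 (m₃ / 6) (m₃ / 6)
      = 8 * b * k * m₁ / 3 + k ^ 2 * (m₃ + 4 * m₁ * m₂ + 2 * m₁ ^ 3) / (3 * m₁) := by
    simp only [secondMomentForm]
    field_simp
    ring
  rw [← hval]
  simpa only [Function.comp_def] using hcont.tendsto.comp (hg.prodMk_nhds (hw₁.prodMk_nhds hw₂))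

lemma tendsto_steadyStateMean {k m₁ m₂ c : ℝ} {φ : ℝ → ℝ} (hm₁ : m₁ ≠ 0) (hφ : ∀ γ > 0, φ γ < 2)
    (hquot : Tendsto (thirdOrderQuot m₁ m₂ φ) (𝓝[>] 0) (𝓝 c)) :
    Tendsto (fun γ => k / γ - k / (2 * γ ^ 2 * m₁) * ((1 - φ γ) / (1 - φ γ / 2))) (𝓝[>] 0)
      (𝓝 (k * (m₂ / 2 + m₁ ^ 2) / m₁)) := by
  refine (tendsto_meanForm (tendsto_nhdsWithin_of_tendsto_nhds tendsto_id) hquot hm₁).congr' ?_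
  filter_upwards [self_mem_nhdsWithin] with γ (hγ : 0 < γ)
  rw [id, meanForm_eq hγ.ne' hm₁ (eq_sub_thirdOrderQuot_mul φ hγ.ne') (hφ γ hγ)]

lemma tendsto_steadyStateSecondMoment {k b m₁ m₂ m₃ : ℝ} {φ : ℝ → ℝ} (hm₁ : m₁ ≠ 0)
    (hφ : ∀ γ > 0, φ γ < 2) (hquot : Tendsto (thirdOrderQuot m₁ m₂ φ) (𝓝[>] 0) (𝓝 (m₃ / 6))) :
    Tendsto (fun γ => b * k / (2 * γ ^ 2 * m₁) * ((1 - φ (2 * γ)) / (1 - φ (2 * γ) / 4)) *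
        ((1 - φ γ) / (1 - φ γ / 2)) + k ^ 2 / γ ^ 2 + k ^ 2 / (16 * γ ^ 3 * m₁) *
          ((-14 + 17 * φ γ + φ (2 * γ) * (2 - 5 * φ γ)) / ((1 - φ (2 * γ) / 4) * (1 - φ γ / 2))))
      (𝓝[>] 0) (𝓝 (8 * b * k * m₁ / 3 + k ^ 2 * (m₃ + 4 * m₁ * m₂ + 2 * m₁ ^ 3) / (3 * m₁))) := by
  have hdouble : Tendsto (fun γ : ℝ => 2 * γ) (𝓝[>] 0) (𝓝[>] 0) :=
    tendsto_nhdsWithin_of_tendsto_nhds_of_eventually_within _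
      (tendsto_nhdsWithin_of_tendsto_nhds ((continuous_const_mul 2).tendsto' 0 0 (by simp)))
      (by filter_upwards [self_mem_nhdsWithin] with γ (hγ : 0 < γ); exact mul_pos two_pos hγ)
  refine (tendsto_secondMomentForm (tendsto_nhdsWithin_of_tendsto_nhds tendsto_id) hquot
    (hquot.comp hdouble) hm₁).congr' ?_
  filter_upwards [self_mem_nhdsWithin] with γ (hγ : 0 < γ)
  have h2γ : 0 < 2 * γ := mul_pos two_pos hγ
  rw [Function.comp_apply, id, secondMomentForm_eq hγ.ne' hm₁ (eq_sub_thirdOrderQuot_mul φ hγ.ne')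
    (eq_sub_thirdOrderQuot_mul φ h2γ.ne') (hφ γ hγ) (by linarith [hφ _ h2γ])]

lemma noise_decomposition_eq {k b m₁ m₂ m₃ CV2 : ℝ} (hk : k ≠ 0) (hm₁ : m₁ ≠ 0)
    (hm : m₂ + 2 * m₁ ^ 2 ≠ 0) (hCV2 : CV2 = (m₂ - m₁ ^ 2) / m₁ ^ 2) :
    1 / 27 + 4 * (9 * m₃ / m₁ ^ 3 - 9 - 6 * CV2 - 7 * CV2 ^ 2) / (27 * (3 + CV2) ^ 2) +
        (16 * b / (3 * (3 + CV2))) * (2 / (k * m₁ * (3 + CV2)))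
      = (8 * b * k * m₁ / 3 + k ^ 2 * (m₃ + 4 * m₁ * m₂ + 2 * m₁ ^ 3) / (3 * m₁)
          - (k * (m₂ / 2 + m₁ ^ 2) / m₁) ^ 2) / (k * (m₂ / 2 + m₁ ^ 2) / m₁) ^ 2 := by
  have h3 : 3 + CV2 ≠ 0 := by
    rw [show 3 + CV2 = (m₂ + 2 * m₁ ^ 2) / m₁ ^ 2 by rw [hCV2]; field_simp; ring]
    exact div_ne_zero hm (pow_ne_zero 2 hm₁)
  have hm₂ : m₂ = m₁ ^ 2 * (1 + CV2) := by rw [hCV2]; field_simp; ring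
  have hmean : k * (m₂ / 2 + m₁ ^ 2) / m₁ = k * m₁ * (3 + CV2) / 2 := by
    rw [hm₂]; field_simp; ring
  rw [hmean, hm₂]
  field_simp
  ring

theorem gene_product_noise_stable_limit_general
    (f : ℝ → ℝ)
    (hf_pos : ∀ τ : ℝ, 0 < τ → 0 < f τ)
    (hf_prob : ∫ τ in Set.Ioi (0:ℝ), f τ = 1)
    (m₁ : ℝ) (hm₁ : m₁ = ∫ τ in Set.Ioi (0:ℝ), τ * f τ)
    (hm₁_int : IntegrableOn (fun τ : ℝ => τ * f τ) (Set.Ioi 0))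
    (hm₁_pos : 0 < m₁)
    (m₂ : ℝ) (hm₂ : m₂ = ∫ τ in Set.Ioi (0:ℝ), τ ^ 2 * f τ)
    (hm₂_int : IntegrableOn (fun τ : ℝ => τ ^ 2 * f τ) (Set.Ioi 0))
    (m₃ : ℝ) (hm₃ : m₃ = ∫ τ in Set.Ioi (0:ℝ), τ ^ 3 * f τ)
    (hm₃_int : IntegrableOn (fun τ : ℝ => τ ^ 3 * f τ) (Set.Ioi 0))
    (k b : ℝ) (hk : 0 < k)
    (φ₁ : ℝ → ℝ) (hφ₁ : ∀ γ : ℝ, φ₁ γ = ∫ τ in Set.Ioi (0:ℝ), f τ * Real.exp (-γ * τ))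
    (φ₂ : ℝ → ℝ) (hφ₂ : ∀ γ : ℝ, φ₂ γ = ∫ τ in Set.Ioi (0:ℝ), f τ * Real.exp (-2 * γ * τ))
    (CV2 : ℝ) (hCV2 : CV2 = (m₂ - m₁ ^ 2) / m₁ ^ 2)
    (xbar : ℝ → ℝ)
    (hxbar : ∀ γ : ℝ, xbar γ =
      k / γ - (k / (2 * γ ^ 2 * m₁)) * ((1 - φ₁ γ) / (1 - φ₁ γ / 2)))
    (x2bar : ℝ → ℝ)
    (hx2bar : ∀ γ : ℝ, x2bar γ =
      (b * k / (2 * γ ^ 2 * m₁)) * ((1 - φ₂ γ) / (1 - φ₂ γ / 4)) *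
          ((1 - φ₁ γ) / (1 - φ₁ γ / 2)) +
        k ^ 2 / γ ^ 2 +
        (k ^ 2 / (16 * γ ^ 3 * m₁)) *
          ((-14 + 17 * φ₁ γ + φ₂ γ * (2 - 5 * φ₁ γ)) / ((1 - φ₂ γ / 4) * (1 - φ₁ γ / 2)))) :
    Tendsto (fun γ : ℝ => (x2bar γ - xbar γ ^ 2) / xbar γ ^ 2)
      (nhdsWithin 0 (Set.Ioi 0))
      (nhds (1 / 27 +
        4 * (9 * m₃ / m₁ ^ 3 - 9 - 6 * CV2 - 7 * CV2 ^ 2) / (27 * (3 + CV2) ^ 2) +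
        (16 * b / (3 * (3 + CV2))) * (2 / (k * m₁ * (3 + CV2))))) := by
  have hf_int : IntegrableOn f (Ioi 0) := .of_integral_ne_zero (by simp [hf_prob])
  have hφ₁_lt : ∀ γ > 0, φ₁ γ < 2 := fun γ hγ => by
    rw [hφ₁]
    linarith [integral_mul_exp_neg_le_integral hf_int (fun τ hτ => (hf_pos τ hτ).le) hγ.le]
  have hquot : Tendsto (thirdOrderQuot m₁ m₂ φ₁) (𝓝[>] 0) (𝓝 (m₃ / 6)) := by
    rw [funext hφ₁]
    exact tendsto_thirdOrderQuot_laplace hf_prob hm₁ hm₁_int hm₂ hm₂_int hm₃ hm₃_int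
  have hxlim : Tendsto xbar (𝓝[>] 0) (𝓝 (k * (m₂ / 2 + m₁ ^ 2) / m₁)) := by
    rw [funext hxbar]
    exact tendsto_steadyStateMean hm₁_pos.ne' hφ₁_lt hquot
  have hx2lim : Tendsto x2bar (𝓝[>] 0)
      (𝓝 (8 * b * k * m₁ / 3 + k ^ 2 * (m₃ + 4 * m₁ * m₂ + 2 * m₁ ^ 3) / (3 * m₁))) := by
    have hφ₂_eq : ∀ γ, φ₂ γ = φ₁ (2 * γ) := fun γ => by rw [hφ₂, hφ₁]; ring_nf
    simp only [hφ₂_eq] at hx2bar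
    rw [funext hx2bar]
    exact tendsto_steadyStateSecondMoment hm₁_pos.ne' hφ₁_lt hquot
  have hm₂_nonneg : 0 ≤ m₂ := hm₂ ▸ setIntegral_nonneg measurableSet_Ioi fun τ hτ =>
    mul_nonneg (pow_nonneg (le_of_lt hτ) 2) (hf_pos τ hτ).le
  rw [noise_decomposition_eq hk.ne' hm₁_pos.ne' (by positivity) hCV2]
  exact (hx2lim.sub (hxlim.pow 2)).div (hxlim.pow 2) (by positivity)

/-- **Equation (50): noise decomposition for a stable gene product into cell-cycle-time and
partitioning contributions.** -/
theorem gene_product_noise_stable_limit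
    (f : ℝ → ℝ) (hf_cont : Continuous f)
    (hf_pos : ∀ τ : ℝ, 0 < τ → 0 < f τ) (hf_supp : ∀ τ : ℝ, τ ≤ 0 → f τ = 0)
    (hf_prob : ∫ τ in Set.Ioi (0:ℝ), f τ = 1)
    (m₁ : ℝ) (hm₁ : m₁ = ∫ τ in Set.Ioi (0:ℝ), τ * f τ)
    (hm₁_int : IntegrableOn (fun τ : ℝ => τ * f τ) (Set.Ioi 0))
    (hm₁_pos : 0 < m₁)
    (m₂ : ℝ) (hm₂ : m₂ = ∫ τ in Set.Ioi (0:ℝ), τ ^ 2 * f τ)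
    (hm₂_int : IntegrableOn (fun τ : ℝ => τ ^ 2 * f τ) (Set.Ioi 0))
    (m₃ : ℝ) (hm₃ : m₃ = ∫ τ in Set.Ioi (0:ℝ), τ ^ 3 * f τ)
    (hm₃_int : IntegrableOn (fun τ : ℝ => τ ^ 3 * f τ) (Set.Ioi 0))
    (k b : ℝ) (hk : 0 < k) (hb : 0 ≤ b)
    (φ₁ : ℝ → ℝ) (hφ₁ : ∀ γ : ℝ, φ₁ γ = ∫ τ in Set.Ioi (0:ℝ), f τ * Real.exp (-γ * τ))
    (φ₂ : ℝ → ℝ) (hφ₂ : ∀ γ : ℝ, φ₂ γ = ∫ τ in Set.Ioi (0:ℝ), f τ * Real.exp (-2 * γ * τ))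
    (CV2 : ℝ) (hCV2 : CV2 = (m₂ - m₁ ^ 2) / m₁ ^ 2)
    (xbar : ℝ → ℝ)
    (hxbar : ∀ γ : ℝ, xbar γ =
      k / γ - (k / (2 * γ ^ 2 * m₁)) * ((1 - φ₁ γ) / (1 - φ₁ γ / 2)))
    (x2bar : ℝ → ℝ)
    (hx2bar : ∀ γ : ℝ, x2bar γ =
      (b * k / (2 * γ ^ 2 * m₁)) * ((1 - φ₂ γ) / (1 - φ₂ γ / 4)) *
          ((1 - φ₁ γ) / (1 - φ₁ γ / 2)) +
        k ^ 2 / γ ^ 2 +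
        (k ^ 2 / (16 * γ ^ 3 * m₁)) *
          ((-14 + 17 * φ₁ γ + φ₂ γ * (2 - 5 * φ₁ γ)) / ((1 - φ₂ γ / 4) * (1 - φ₁ γ / 2)))) :
    Tendsto (fun γ : ℝ => (x2bar γ - xbar γ ^ 2) / xbar γ ^ 2)
      (nhdsWithin 0 (Set.Ioi 0))
      (nhds (1 / 27 +
        4 * (9 * m₃ / m₁ ^ 3 - 9 - 6 * CV2 - 7 * CV2 ^ 2) / (27 * (3 + CV2) ^ 2) +
        (16 * b / (3 * (3 + CV2))) * (2 / (k * m₁ * (3 + CV2))))) :=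
  gene_product_noise_stable_limit_general f hf_pos hf_prob m₁ hm₁ hm₁_int hm₁_pos m₂ hm₂ hm₂_int m₃
    hm₃ hm₃_int k b hk φ₁ hφ₁ φ₂ hφ₂ CV2 hCV2 xbar hxbar x2bar hx2bar
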